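/- arXiv:1108.0388 — 4 statements merged into one kernel-verified Lean document; each statement's English description precedes it below -/
import Mathlib

section
/- Let φ = (1+√5)/2 and k ≥ 1, and let S = Σ_{i=0}^{k} φ^i · 2^(k-i). Then the ratio (2·S + φ^(k+1))/(S + φ^(k+1)) tends to 2 as k → ∞. -/
open Finset Filter

theorem stmt_1 (φ : ℝ) (hφ : φ = (1 + Real.sqrt 5) / 2) :
    Tendsto (fun k : ℕ =>
        (2 * (∑ i ∈ range (k + 1), φ ^ i * 2 ^ (k - i)) + φ ^ (k + 1)) /
          ((∑ i ∈ range (k + 1), φ ^ i * 2 ^ (k - i)) + φ ^ (k + 1)))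
      atTop (nhds 2) := by
  have h5 : Real.sqrt 5 < 3 := by
    nlinarith [Real.sq_sqrt (by norm_num : (5:ℝ) ≥ 0), Real.sqrt_nonneg 5]
  have h5' : (0:ℝ) ≤ Real.sqrt 5 := Real.sqrt_nonneg 5
  have hφpos : 0 < φ := by rw [hφ]; linarith
  have hφ2 : φ < 2 := by rw [hφ]; linarith
  set f : ℝ → ℝ := fun x => (2*(1-x) + (2-φ)*x)/((1-x) + (2-φ)*x) with hf
  have hcont : ContinuousAt f 0 := by
    apply ContinuousAt.div
    · fun_prop
    · fun_prop
    · norm_num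
  have hr : Tendsto (fun k : ℕ => (φ/2)^(k+1)) atTop (nhds 0) := by
    have h := tendsto_pow_atTop_nhds_zero_of_lt_one
      (le_of_lt (by positivity : (0:ℝ) < φ/2)) (by linarith : φ/2 < 1)
    exact h.comp (tendsto_add_atTop_nat 1)
  have heq : ∀ k : ℕ, (2 * (∑ i ∈ range (k + 1), φ ^ i * 2 ^ (k - i)) + φ ^ (k + 1)) /
      ((∑ i ∈ range (k + 1), φ ^ i * 2 ^ (k - i)) + φ ^ (k + 1)) = f ((φ/2)^(k+1)) := by
    intro k
    have hS : (∑ i ∈ range (k + 1), φ ^ i * 2 ^ (k - i)) * (φ - 2)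
        = φ^(k+1) - 2^(k+1) := by
      have h := geom_sum₂_mul φ (2:ℝ) (k+1)
      simpa using h
    set S := ∑ i ∈ range (k + 1), φ ^ i * 2 ^ (k - i) with hSdef
    have hSpos : 0 < S := by
      apply Finset.sum_pos
      · intro i _; positivity
      · exact nonempty_range_add_one
    have hden : (0:ℝ) < S + φ^(k+1) := by positivity
    have h2 : (0:ℝ) < 2^(k+1) := by positivity
    have hrval : (φ/2)^(k+1) = φ^(k+1)/2^(k+1) := div_pow _ _ _
    have hfden : ((1 - (φ/2)^(k+1)) + (2-φ)*(φ/2)^(k+1))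
        = (2-φ)*(S + φ^(k+1))/2^(k+1) := by
      rw [hrval]
      field_simp
      linear_combination hS
    have hfdenpos : (0:ℝ) < (1 - (φ/2)^(k+1)) + (2-φ)*(φ/2)^(k+1) := by
      rw [hfden]; exact div_pos (mul_pos (by linarith) hden) h2
    rw [hf]
    simp only
    rw [div_eq_div_iff hden.ne' hfdenpos.ne', hrval]
    field_simp
    linear_combination (-φ^(k+1)) * hS
  have hfun : (fun k : ℕ =>
        (2 * (∑ i ∈ range (k + 1), φ ^ i * 2 ^ (k - i)) + φ ^ (k + 1)) /
          ((∑ i ∈ range (k + 1), φ ^ i * 2 ^ (k - i)) + φ ^ (k + 1)))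
      = fun k => f ((φ/2)^(k+1)) := funext heq
  rw [hfun]
  have h0 : f 0 = 2 := by rw [hf]; norm_num
  have := hcont.tendsto.comp hr
  rwa [h0] at this
end

section
/- Chain lemma: Let α > 1, k ≥ 1, and let p₁,…,p_k and q₁,…,q_k be positive reals such that (i) q_i ≤ α·p_i for all 1 ≤ i ≤ k−1, (ii) q_i ≤ p_{i+1} for all 1 ≤ i ≤ k−1, and (iii) q_k ≤ p_k. Then Σ_{i=1}^k q_i ≤ ((2 − 1/α)·α^k − α)/(α^k − 1) · Σ_{i=1}^k p_i. -/
/-!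
Bound each `q i` with `i < k` by the convex combination `t i * (α * p i) + (1 - t i) * p (i + 1)`
of its two constraints, and `q k` by `p k`. If `t 0 = 1`, `α * t (i + 1) = t i + (R - 1)` and
`t (k - 1) = 2 - R`, every `p i` then collects total coefficient exactly `R`. The recursion is
solved by `t i = c + (1 - c) / α ^ i` with `R = 1 + (α - 1) * c`, these weights lie in `[0, 1]`
as soon as `c` does, and the terminal condition forces `c = (α ^ (k - 1) - 1) / (α ^ k - 1)`,
which turns `R` into the ratio of the theorem.
-/

open Finset

section Weights

variable {α R : ℝ} {t p q : ℕ → ℝ}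

lemma sum_Icc_weighted_eq (ht0 : t 0 = 1) (hrec : ∀ i, α * t (i + 1) = t i + (R - 1)) (m : ℕ) :
    ∑ i ∈ Icc 1 m, (t i * (α * p i) + (1 - t i) * p (i + 1))
      = R * ∑ i ∈ Icc 1 m, p i + (1 - t m) * p (m + 1) := by
  induction m with
  | zero => simp [ht0]
  | succ n ih =>
    rw [sum_Icc_succ_top (by omega), sum_Icc_succ_top (by omega), ih]
    linear_combination p (n + 1) * hrec n

lemma sum_Icc_le_of_weights {m : ℕ} (ht0 : t 0 = 1)
    (hrec : ∀ i, α * t (i + 1) = t i + (R - 1)) (ht : ∀ i, t i ∈ Set.Icc 0 1) (htm : t m = 2 - R)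
    (h1 : ∀ i, 1 ≤ i → i < m + 1 → q i ≤ α * p i)
    (h2 : ∀ i, 1 ≤ i → i < m + 1 → q i ≤ p (i + 1))
    (h3 : q (m + 1) ≤ p (m + 1)) :
    ∑ i ∈ Icc 1 (m + 1), q i ≤ R * ∑ i ∈ Icc 1 (m + 1), p i := by
  have hstep : ∀ i ∈ Icc 1 m, q i ≤ t i * (α * p i) + (1 - t i) * p (i + 1) := by
    intro i hi
    rw [Finset.mem_Icc] at hi
    obtain ⟨ht_nonneg, ht_le_one⟩ := ht i
    calc q i = t i * q i + (1 - t i) * q i := by ring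
      _ ≤ t i * (α * p i) + (1 - t i) * p (i + 1) :=
        add_le_add (mul_le_mul_of_nonneg_left (h1 i hi.1 (by omega)) ht_nonneg)
          (mul_le_mul_of_nonneg_left (h2 i hi.1 (by omega)) (sub_nonneg.2 ht_le_one))
  calc ∑ i ∈ Icc 1 (m + 1), q i = ∑ i ∈ Icc 1 m, q i + q (m + 1) := sum_Icc_succ_top (by omega) q
    _ ≤ ∑ i ∈ Icc 1 m, (t i * (α * p i) + (1 - t i) * p (i + 1)) + p (m + 1) :=
        add_le_add (sum_le_sum hstep) h3
    _ = R * ∑ i ∈ Icc 1 (m + 1), p i := by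
        rw [sum_Icc_weighted_eq ht0 hrec, sum_Icc_succ_top (by omega), htm]
        ring

end Weights

section ChainWeight

noncomputable def chainWeight (α c : ℝ) (i : ℕ) : ℝ := c + (1 - c) / α ^ i

variable {α c : ℝ}

@[simp]
lemma chainWeight_zero : chainWeight α c 0 = 1 := by
  simp [chainWeight]

lemma mul_chainWeight_succ (hα : α ≠ 0) (i : ℕ) :
    α * chainWeight α c (i + 1) = chainWeight α c i + (α - 1) * c := by
  unfold chainWeight
  field_simp
  ring

lemma chainWeight_mem_Icc (hα : 1 ≤ α) (hc : c ∈ Set.Icc 0 1) (i : ℕ) :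
    chainWeight α c i ∈ Set.Icc 0 1 := by
  obtain ⟨hc0, hc1⟩ := hc
  have h_nonneg : 0 ≤ (1 - c) / α ^ i := div_nonneg (by linarith) (by positivity)
  have h_le : (1 - c) / α ^ i ≤ 1 - c := div_le_self (by linarith) (one_le_pow₀ hα)
  constructor <;> unfold chainWeight <;> linarith

end ChainWeight

section ChainCoeff

noncomputable def chainCoeff (α : ℝ) (m : ℕ) : ℝ := (α ^ m - 1) / (α ^ (m + 1) - 1)

variable {α : ℝ} (m : ℕ)

lemma chainCoeff_mem_Icc (hα : 1 < α) : chainCoeff α m ∈ Set.Icc 0 1 := by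
  have hm : 1 ≤ α ^ m := one_le_pow₀ hα.le
  have hD : 0 < α ^ (m + 1) - 1 := by linarith [one_lt_pow₀ hα (n := m + 1) (by omega)]
  have hmono : α ^ m ≤ α ^ (m + 1) := pow_le_pow_right₀ hα.le m.le_succ
  exact ⟨div_nonneg (by linarith) hD.le, div_le_one_of_le₀ (by linarith) hD.le⟩

lemma chainWeight_chainCoeff (hα : 1 < α) :
    chainWeight α (chainCoeff α m) m = 2 - (1 + (α - 1) * chainCoeff α m) := by
  have hD : α ^ (m + 1) - 1 ≠ 0 := by linarith [one_lt_pow₀ hα (n := m + 1) (by omega)]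
  have hm : α ^ m ≠ 0 := by positivity
  unfold chainWeight chainCoeff
  field_simp
  ring

lemma one_add_sub_one_mul_chainCoeff (hα : 1 < α) :
    1 + (α - 1) * chainCoeff α m = ((2 - 1 / α) * α ^ (m + 1) - α) / (α ^ (m + 1) - 1) := by
  have hD : α ^ (m + 1) - 1 ≠ 0 := by linarith [one_lt_pow₀ hα (n := m + 1) (by omega)]
  have hα0 : α ≠ 0 := by positivity
  unfold chainCoeff
  field_simp
  ring

end ChainCoeff

theorem stmt_3_general (α : ℝ) (hα : 1 < α) (k : ℕ) (hk : 1 ≤ k) (p q : ℕ → ℝ)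
    (h1 : ∀ i, 1 ≤ i → i < k → q i ≤ α * p i)
    (h2 : ∀ i, 1 ≤ i → i < k → q i ≤ p (i + 1))
    (h3 : q k ≤ p k) :
    ∑ i ∈ Icc 1 k, q i ≤ ((2 - 1 / α) * α ^ k - α) / (α ^ k - 1) * ∑ i ∈ Icc 1 k, p i := by
  obtain ⟨m, rfl⟩ : ∃ m, k = m + 1 := ⟨k - 1, by omega⟩
  rw [← one_add_sub_one_mul_chainCoeff m hα]
  refine sum_Icc_le_of_weights (t := chainWeight α (chainCoeff α m)) chainWeight_zero
    (fun i => ?_) (chainWeight_mem_Icc hα.le (chainCoeff_mem_Icc m hα))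
    (chainWeight_chainCoeff m hα) h1 h2 h3
  rw [mul_chainWeight_succ (by positivity)]
  ring

theorem stmt_3 (α : ℝ) (hα : 1 < α) (k : ℕ) (hk : 1 ≤ k) (p q : ℕ → ℝ)
    (hp : ∀ i, 1 ≤ i → i ≤ k → 0 < p i) (hq : ∀ i, 1 ≤ i → i ≤ k → 0 < q i)
    (h1 : ∀ i, 1 ≤ i → i < k → q i ≤ α * p i)
    (h2 : ∀ i, 1 ≤ i → i < k → q i ≤ p (i + 1))
    (h3 : q k ≤ p k) :
    ∑ i ∈ Icc 1 k, q i ≤ ((2 - 1 / α) * α ^ k - α) / (α ^ k - 1) * ∑ i ∈ Icc 1 k, p i :=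
  stmt_3_general α hα k hk p q h1 h2 h3
end

section
/- Let φ = (1+√5)/2 and α = φ². Then for every k ≥ 1, ((2 − 1/α)·α^k − α)/(α^k − 1) ≤ φ. -/
/-! Since `1 / φ² = ψ² = ψ + 1`, the coefficient `2 - 1 / α` is exactly `φ`, so the numerator is
`φ α^k - α ≤ φ α^k - φ = φ (α^k - 1)` because `φ ≤ φ² = α`. -/

open Real

theorem mul_sub_div_sub_one_le {c a t : ℝ} (hc : 0 ≤ c) (hca : c ≤ a) (ht : 1 ≤ t) :
    (c * t - a) / (t - 1) ≤ c :=
  div_le_of_le_mul₀ (sub_nonneg.2 ht) hc (by linarith)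

theorem two_sub_one_div_goldenRatio_sq : 2 - 1 / goldenRatio ^ 2 = goldenRatio := by
  rw [one_div, ← inv_pow, inv_goldenRatio, neg_sq, goldenConj_sq]
  linarith [one_sub_goldenRatio]

theorem stmt_5_general (φ α : ℝ) (hφ : φ = (1 + Real.sqrt 5) / 2) (hα : α = φ ^ 2)
    (k : ℕ) :
    ((2 - 1 / α) * α ^ k - α) / (α ^ k - 1) ≤ φ := by
  have hgold : φ = goldenRatio := hφ
  subst hα hgold
  have hle_sq : goldenRatio ≤ goldenRatio ^ 2 := by linarith [goldenRatio_sq]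
  rw [two_sub_one_div_goldenRatio_sq]
  exact mul_sub_div_sub_one_le goldenRatio_pos.le hle_sq
    (one_le_pow₀ (one_lt_goldenRatio.le.trans hle_sq))

theorem stmt_5 (φ α : ℝ) (hφ : φ = (1 + Real.sqrt 5) / 2) (hα : α = φ ^ 2)
    (k : ℕ) (hk : 1 ≤ k) :
    ((2 - 1 / α) * α ^ k - α) / (α ^ k - 1) ≤ φ :=
  stmt_5_general φ α hφ hα k
end

section
/- Corollary of the chain lemma: Let φ = (1+√5)/2 and α = φ². If positive reals p₁,…,p_k, q₁,…,q_k satisfy q_i ≤ α·p_i for 1 ≤ i ≤ k−1, q_i ≤ p_{i+1} for 1 ≤ i ≤ k−1, and q_k ≤ p_k, then Σ q_i ≤ φ · Σ p_i. -/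
/-!
Since `α⁻¹ + (1 - α⁻¹) = 1`, each constraint pair `q i ≤ α * p i`, `q i ≤ p (i + 1)` gives
`q i ≤ p i + (1 - α⁻¹) * p (i + 1)`. Summing along the chain, every `p j` is charged at most
`2 - α⁻¹` times, and for `α = φ²` this factor is `φ` because `φ² = φ + 1`.
-/

open Finset Real

section Chain

variable {K : Type*} [Field K] [LinearOrder K] [IsStrictOrderedRing K]

lemma le_add_one_sub_inv_mul_of_le_mul {α x a b : K} (hα : 1 ≤ α) (ha : x ≤ α * a)
    (hb : x ≤ b) : x ≤ a + (1 - α⁻¹) * b := by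
  have hα₀ : 0 < α := zero_lt_one.trans_le hα
  have hinv : 0 ≤ 1 - α⁻¹ := sub_nonneg.2 (inv_le_one_of_one_le₀ hα)
  calc x = α⁻¹ * x + (1 - α⁻¹) * x := by ring
    _ ≤ α⁻¹ * (α * a) + (1 - α⁻¹) * b := by gcongr
    _ = a + (1 - α⁻¹) * b := by rw [inv_mul_cancel_left₀ hα₀.ne']

lemma sum_Icc_succ_le_sum_Icc {p : ℕ → K} {n : ℕ} (hp : ∀ i ∈ Icc 1 (n + 1), 0 ≤ p i) :
    ∑ i ∈ Icc 1 n, p (i + 1) ≤ ∑ i ∈ Icc 1 (n + 1), p i :=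
  calc ∑ i ∈ Icc 1 n, p (i + 1) = ∑ i ∈ Icc 2 (n + 1), p i := by
        rw [← map_add_right_Icc 1 n 1, sum_map]
        rfl
    _ ≤ ∑ i ∈ Icc 1 (n + 1), p i :=
        sum_le_sum_of_subset_of_nonneg (Icc_subset_Icc_left one_le_two) fun i hi _ => hp i hi

theorem sum_le_two_sub_inv_mul_sum_of_chain {α : K} (hα : 1 ≤ α) {k : ℕ} (hk : 1 ≤ k)
    {p q : ℕ → K} (hp : ∀ i ∈ Icc 1 k, 0 ≤ p i)
    (h1 : ∀ i, 1 ≤ i → i < k → q i ≤ α * p i)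
    (h2 : ∀ i, 1 ≤ i → i < k → q i ≤ p (i + 1))
    (h3 : q k ≤ p k) :
    ∑ i ∈ Icc 1 k, q i ≤ (2 - α⁻¹) * ∑ i ∈ Icc 1 k, p i := by
  obtain ⟨n, rfl⟩ := Nat.exists_eq_add_of_le' hk
  have hinv : 0 ≤ 1 - α⁻¹ := sub_nonneg.2 (inv_le_one_of_one_le₀ hα)
  have link : ∀ i ∈ Icc 1 n, q i ≤ p i + (1 - α⁻¹) * p (i + 1) := by
    intro i hi
    obtain ⟨hi₁, hin⟩ := mem_Icc.1 hi
    exact le_add_one_sub_inv_mul_of_le_mul hα (h1 i hi₁ (by omega)) (h2 i hi₁ (by omega))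
  calc ∑ i ∈ Icc 1 (n + 1), q i = ∑ i ∈ Icc 1 n, q i + q (n + 1) :=
        sum_Icc_succ_top (by omega) q
    _ ≤ ∑ i ∈ Icc 1 n, (p i + (1 - α⁻¹) * p (i + 1)) + p (n + 1) :=
        add_le_add (sum_le_sum link) h3
    _ = ∑ i ∈ Icc 1 (n + 1), p i + (1 - α⁻¹) * ∑ i ∈ Icc 1 n, p (i + 1) := by
        rw [sum_add_distrib, ← mul_sum, sum_Icc_succ_top (by omega) p]
        ring
    _ ≤ ∑ i ∈ Icc 1 (n + 1), p i + (1 - α⁻¹) * ∑ i ∈ Icc 1 (n + 1), p i := by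
        gcongr
        exact sum_Icc_succ_le_sum_Icc hp
    _ = (2 - α⁻¹) * ∑ i ∈ Icc 1 (n + 1), p i := by ring

end Chain

lemma two_sub_inv_goldenRatio_sq : 2 - (goldenRatio ^ 2)⁻¹ = goldenRatio := by
  rw [← inv_pow, inv_goldenRatio, neg_sq, goldenConj_sq, ← one_sub_goldenConj]
  ring

theorem stmt_6_general (φ α : ℝ) (hφ : φ = (1 + Real.sqrt 5) / 2) (hα : α = φ ^ 2)
    (k : ℕ) (hk : 1 ≤ k) (p q : ℕ → ℝ)
    (hp : ∀ i, 1 ≤ i → i ≤ k → 0 < p i)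
    (h1 : ∀ i, 1 ≤ i → i < k → q i ≤ α * p i)
    (h2 : ∀ i, 1 ≤ i → i < k → q i ≤ p (i + 1))
    (h3 : q k ≤ p k) :
    ∑ i ∈ Icc 1 k, q i ≤ φ * ∑ i ∈ Icc 1 k, p i := by
  obtain rfl : φ = goldenRatio := hφ
  subst hα
  have one_le_sq : 1 ≤ goldenRatio ^ 2 := one_le_pow₀ one_lt_goldenRatio.le
  have hp' : ∀ i ∈ Icc 1 k, 0 ≤ p i := fun i hi => (hp i (mem_Icc.1 hi).1 (mem_Icc.1 hi).2).le
  calc ∑ i ∈ Icc 1 k, q i ≤ (2 - (goldenRatio ^ 2)⁻¹) * ∑ i ∈ Icc 1 k, p i :=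
        sum_le_two_sub_inv_mul_sum_of_chain one_le_sq hk hp' h1 h2 h3
    _ = goldenRatio * ∑ i ∈ Icc 1 k, p i := by rw [two_sub_inv_goldenRatio_sq]

theorem stmt_6 (φ α : ℝ) (hφ : φ = (1 + Real.sqrt 5) / 2) (hα : α = φ ^ 2)
    (k : ℕ) (hk : 1 ≤ k) (p q : ℕ → ℝ)
    (hp : ∀ i, 1 ≤ i → i ≤ k → 0 < p i) (hq : ∀ i, 1 ≤ i → i ≤ k → 0 < q i)
    (h1 : ∀ i, 1 ≤ i → i < k → q i ≤ α * p i)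
    (h2 : ∀ i, 1 ≤ i → i < k → q i ≤ p (i + 1))
    (h3 : q k ≤ p k) :
    ∑ i ∈ Icc 1 k, q i ≤ φ * ∑ i ∈ Icc 1 k, p i :=
  stmt_6_general φ α hφ hα k hk p q hp h1 h2 h3
end
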